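/- arXiv:1309.3054 — 3 statements merged into one kernel-verified Lean document; each statement's English description precedes it below -/
import Mathlib

section
/- Let φ ∈ (0,1), ω = e^{2πiφ}, α ∈ ℂ, β = −iα, and let θ_s ∈ ℂ satisfy θ_s² = ω/(ω²−3ω+1+i(ω²−1)). Define Ψ : ℤ → ℂ² by Ψ(x) = (−θ_s)^x · (α, (1−ω)α+ωβ) for x ≥ 1, Ψ(0) = (α, β), and Ψ(x) = θ_s^{−x} · ((ω−1)β+ωα, β) for x ≤ −1. Then |θ_s|² = 1/(3−2cos(2πφ)+2sin(2πφ)), and the measure μ(x) = |Ψ^L(x)|² + |Ψ^R(x)|² satisfies μ(0) = 2|α|² and μ(x) = 2|α|² · |θ_s|^{2|x|} · (2−cos(2πφ)+sin(2πφ)) for every x ≠ 0; in particular μ is symmetric with respect to the origin. -/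
noncomputable section

/-- Left component of the explicit stationary state of the Wojcik model. -/
def wojcikPsiL (α β ω θ : ℂ) (x : ℤ) : ℂ :=
  if 1 ≤ x then (-θ) ^ x.toNat * α
  else if x = 0 then α
  else θ ^ (-x).toNat * ((ω - 1) * β + ω * α)

/-- Right component of the explicit stationary state of the Wojcik model. -/
def wojcikPsiR (α β ω θ : ℂ) (x : ℤ) : ℂ :=
  if 1 ≤ x then (-θ) ^ x.toNat * ((1 - ω) * α + ω * β)
  else if x = 0 then β
  else θ ^ (-x).toNat * β

/-- The measure at position `x` associated with the explicit stationary state. -/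
def wojcikMu (α β ω θ : ℂ) (x : ℤ) : ℝ :=
  ‖wojcikPsiL α β ω θ x‖ ^ 2 + ‖wojcikPsiR α β ω θ x‖ ^ 2

/-!
For `β = -iα` both off-origin amplitudes are unit multiples of `(1 - (1 + i)ω)α`, so away from
the origin `μ(x) = |α|² |θ|^{2|x|} (1 + d)` with `d = |1 - (1 + i)ω|²`. On the unit circle
`ω̄ = ω⁻¹` turns the denominator in the definition of `θ²` into `-ω d`, so `θ² = -1/d` and
`|θ|² = 1/d`; finally `d = 3 - 2 cos 2πφ + 2 sin 2πφ` when `ω = e^{2πiφ}`.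
-/

open Complex ComplexConjugate

section Measure

variable (α β ω θ : ℂ)

theorem wojcikMu_zero : wojcikMu α β ω θ 0 = ‖α‖ ^ 2 + ‖β‖ ^ 2 := by
  simp [wojcikMu, wojcikPsiL, wojcikPsiR]

theorem wojcikMu_of_pos {x : ℤ} (hx : 0 < x) :
    wojcikMu α β ω θ x = ‖θ‖ ^ (2 * x.natAbs) * (‖α‖ ^ 2 + ‖(1 - ω) * α + ω * β‖ ^ 2) := by
  have hpos : 1 ≤ x := hx
  have hn : x.toNat = x.natAbs := by omega
  simp only [wojcikMu, wojcikPsiL, wojcikPsiR, if_pos hpos, hn, norm_mul, norm_pow, norm_neg]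
  ring

theorem wojcikMu_of_neg {x : ℤ} (hx : x < 0) :
    wojcikMu α β ω θ x = ‖θ‖ ^ (2 * x.natAbs) * (‖(ω - 1) * β + ω * α‖ ^ 2 + ‖β‖ ^ 2) := by
  have hn : (-x).toNat = x.natAbs := by omega
  simp only [wojcikMu, wojcikPsiL, wojcikPsiR, if_neg (show ¬1 ≤ x by omega), if_neg hx.ne, hn,
    norm_mul, norm_pow]
  ring

theorem wojcikMu_of_eq_neg_I_mul (hβ : β = -I * α) (x : ℤ) (hx : x ≠ 0) :
    wojcikMu α β ω θ x = ‖α‖ ^ 2 * ‖θ‖ ^ (2 * x.natAbs) * (1 + ‖1 - (1 + I) * ω‖ ^ 2) := by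
  subst hβ
  rcases hx.lt_or_gt with hneg | hpos
  · rw [wojcikMu_of_neg _ _ _ _ hneg,
      show (ω - 1) * (-I * α) + ω * α = I * ((1 - (1 + I) * ω) * α) by
        linear_combination ω * α * I_sq]
    simp only [norm_mul, norm_neg, norm_I]
    ring
  · rw [wojcikMu_of_pos _ _ _ _ hpos,
      show (1 - ω) * α + ω * (-I * α) = (1 - (1 + I) * ω) * α by ring]
    simp only [norm_mul]
    ring

end Measure

section UnitCircle

variable {ω : ℂ}

theorem sq_norm_one_sub_one_add_I_mul (hω : ‖ω‖ = 1) :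
    ‖1 - (1 + I) * ω‖ ^ 2 = 3 - 2 * ω.re + 2 * ω.im := by
  have hnorm : ω.re * ω.re + ω.im * ω.im = 1 := by
    rw [← normSq_apply, ← Complex.sq_norm, hω, one_pow]
  rw [Complex.sq_norm, normSq_apply]
  simp only [sub_re, one_re, mul_re, add_re, I_re, I_im, sub_im, one_im, mul_im, add_im]
  linear_combination 2 * hnorm

theorem wojcik_denominator_eq (hω : ‖ω‖ = 1) :
    ω ^ 2 - 3 * ω + 1 + I * (ω ^ 2 - 1) = -ω * ((‖1 - (1 + I) * ω‖ ^ 2 : ℝ) : ℂ) := by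
  have hconj : ω * conj ω = 1 := by rw [mul_conj', hω]; norm_num
  rw [ofReal_pow, ← mul_conj', map_sub, map_one, map_mul, map_add, map_one, conj_I]
  linear_combination (-1 + I + 2 * ω) * hconj - ω ^ 2 * conj ω * I_sq

theorem sq_norm_of_sq_eq_div_wojcik_denominator {θ : ℂ} (hω : ‖ω‖ = 1)
    (hθ : θ ^ 2 = ω / (ω ^ 2 - 3 * ω + 1 + I * (ω ^ 2 - 1))) :
    ‖θ‖ ^ 2 = 1 / ‖1 - (1 + I) * ω‖ ^ 2 := by
  have hω0 : ω ≠ 0 := norm_ne_zero_iff.mp (by rw [hω]; exact one_ne_zero)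
  have hθ' : θ ^ 2 = -(((‖1 - (1 + I) * ω‖ ^ 2 : ℝ) : ℂ))⁻¹ := by
    rw [hθ, wojcik_denominator_eq hω, neg_mul, div_neg, div_mul_cancel_left₀ hω0]
  rw [← norm_pow, hθ', norm_neg, norm_inv, norm_real, Real.norm_of_nonneg (by positivity),
    one_div]

end UnitCircle

theorem wojcik_stationary_measure_beta_eq_neg_i_alpha_general
    (φ : ℝ) (ω α β θ : ℂ)
    (hω : ω = Complex.exp (2 * (Real.pi : ℂ) * Complex.I * (φ : ℂ)))
    (hβ : β = -Complex.I * α)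
    (hθ : θ ^ 2 = ω / (ω ^ 2 - 3 * ω + 1 + Complex.I * (ω ^ 2 - 1))) :
    ‖θ‖ ^ 2 =
      1 / (3 - 2 * Real.cos (2 * Real.pi * φ) + 2 * Real.sin (2 * Real.pi * φ)) ∧
    wojcikMu α β ω θ 0 = 2 * ‖α‖ ^ 2 ∧
    (∀ x : ℤ, x ≠ 0 →
      wojcikMu α β ω θ x =
        2 * ‖α‖ ^ 2 * ‖θ‖ ^ (2 * x.natAbs) *
          (2 - Real.cos (2 * Real.pi * φ) + Real.sin (2 * Real.pi * φ))) ∧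
    (∀ x : ℤ, wojcikMu α β ω θ (-x) = wojcikMu α β ω θ x) := by
  have hω' : ω = exp (((2 * Real.pi * φ : ℝ) : ℂ) * I) := by rw [hω]; push_cast; ring_nf
  have hω1 : ‖ω‖ = 1 := by rw [hω', norm_exp_ofReal_mul_I]
  have hd : ‖1 - (1 + I) * ω‖ ^ 2 =
      3 - 2 * Real.cos (2 * Real.pi * φ) + 2 * Real.sin (2 * Real.pi * φ) := by
    rw [sq_norm_one_sub_one_add_I_mul hω1, hω', exp_ofReal_mul_I_re, exp_ofReal_mul_I_im]
  have hμ := wojcikMu_of_eq_neg_I_mul α β ω θ hβ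
  refine ⟨by rw [sq_norm_of_sq_eq_div_wojcik_denominator hω1 hθ, hd], ?_,
    fun x hx => by rw [hμ x hx, hd]; ring, fun x => ?_⟩
  · rw [wojcikMu_zero, hβ, norm_mul, norm_neg, norm_I]
    ring
  · rcases eq_or_ne x 0 with rfl | hx
    · rw [neg_zero]
    · rw [hμ x hx, hμ (-x) (neg_ne_zero.mpr hx), Int.natAbs_neg]

theorem wojcik_stationary_measure_beta_eq_neg_i_alpha
    (φ : ℝ) (hφ : φ ∈ Set.Ioo (0 : ℝ) 1) (ω α β θ : ℂ)
    (hω : ω = Complex.exp (2 * (Real.pi : ℂ) * Complex.I * (φ : ℂ)))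
    (hβ : β = -Complex.I * α)
    (hθ : θ ^ 2 = ω / (ω ^ 2 - 3 * ω + 1 + Complex.I * (ω ^ 2 - 1))) :
    ‖θ‖ ^ 2 =
      1 / (3 - 2 * Real.cos (2 * Real.pi * φ) + 2 * Real.sin (2 * Real.pi * φ)) ∧
    wojcikMu α β ω θ 0 = 2 * ‖α‖ ^ 2 ∧
    (∀ x : ℤ, x ≠ 0 →
      wojcikMu α β ω θ x =
        2 * ‖α‖ ^ 2 * ‖θ‖ ^ (2 * x.natAbs) *
          (2 - Real.cos (2 * Real.pi * φ) + Real.sin (2 * Real.pi * φ))) ∧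
    (∀ x : ℤ, wojcikMu α β ω θ (-x) = wojcikMu α β ω θ x) :=
  wojcik_stationary_measure_beta_eq_neg_i_alpha_general φ ω α β θ hω hβ hθ

end
end

section
/- Let ω, λ ∈ ℂ with λ ≠ 0, and let Ψ^L, Ψ^R : ℤ → ℂ satisfy the eigenvalue equations of the Wojcik model with eigenvalue λ and phase ω. Let z ∈ ℂ, z ≠ 0, be such that the families (Ψ^L(x) z^x)_{x ≤ −1} and (Ψ^R(x) z^x)_{x ≤ −1} are absolutely summable, and set f^L_−(z) = Σ_{x=−1}^{−∞} Ψ^L(x) z^x, f^R_−(z) = Σ_{x=−1}^{−∞} Ψ^R(x) z^x, α = Ψ^L(0), β = Ψ^R(0). Then (λ − 1/(√2 z)) f^L_−(z) − (1/(√2 z)) f^R_−(z) = ω(α+β)/(√2 z) and −(z/√2) f^L_−(z) + (λ + z/√2) f^R_−(z) = −λβ. -/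
/-!
Multiply the eigenvalue equations at `x ≤ -1` by `z^x` and sum. In the first equation the
right-hand side is shifted by one site, so summing it over `x ≤ -2` gives `(f^L_- + f^R_-)/(√2 z)`,
while the boundary term `x = -1` feels the coin `ω` at the origin and contributes `ω(α+β)/(√2 z)`.
In the second equation the right-hand side lives on `x ≤ -2`; the missing term `x = -1` is supplied
by the second equation at `x = 0`, which produces `-λβ`.
-/

noncomputable section

/-- The coin phase of the Wojcik model: `ω` at the origin, `1` elsewhere. -/
def wojcikCoin (ω : ℂ) (x : ℤ) : ℂ := if x = 0 then ω else 1

/-- `ΨL, ΨR : ℤ → ℂ` satisfy the eigenvalue equations of the Wojcik model with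
eigenvalue `lam` and phase `ω`. -/
def WojcikEigenEq (ω lam : ℂ) (ΨL ΨR : ℤ → ℂ) : Prop :=
  ∀ x : ℤ,
    lam * ΨL x = wojcikCoin ω (x + 1) / (Real.sqrt 2 : ℂ) * (ΨL (x + 1) + ΨR (x + 1)) ∧
    lam * ΨR x = wojcikCoin ω (x - 1) / (Real.sqrt 2 : ℂ) * (ΨL (x - 1) - ΨR (x - 1))

lemma wojcikCoin_zero (ω : ℂ) : wojcikCoin ω 0 = ω := if_pos rfl

lemma wojcikCoin_of_ne_zero (ω : ℂ) {x : ℤ} (hx : x ≠ 0) : wojcikCoin ω x = 1 := if_neg hx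

/-- The term `x = -(n+1)` of the generating function `f₋(z) = ∑_{x ≤ -1} Ψ(x) z^x`. -/
def negTerm (Ψ : ℤ → ℂ) (z : ℂ) (n : ℕ) : ℂ := Ψ (-((n : ℤ) + 1)) * z ^ (-((n : ℤ) + 1))

lemma negTerm_zero (Ψ : ℤ → ℂ) (z : ℂ) : negTerm Ψ z 0 = Ψ (-1) / z := by
  simp [negTerm, div_eq_mul_inv]

lemma negTerm_succ (Ψ : ℤ → ℂ) {z : ℂ} (hz : z ≠ 0) (n : ℕ) :
    negTerm Ψ z (n + 1) = Ψ (-((n : ℤ) + 1) - 1) * z ^ (-((n : ℤ) + 1)) / z := by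
  have hx : -(((n + 1 : ℕ) : ℤ) + 1) = -((n : ℤ) + 1) - 1 := by push_cast; ring
  rw [negTerm, hx, zpow_sub_one₀ hz, ← mul_assoc, div_eq_mul_inv]

namespace WojcikEigenEq

variable {ω lam : ℂ} {ΨL ΨR : ℤ → ℂ} {z : ℂ}

lemma lam_mul_negTerm_zero_left (heig : WojcikEigenEq ω lam ΨL ΨR) :
    lam * negTerm ΨL z 0 = ω * (ΨL 0 + ΨR 0) / ((Real.sqrt 2 : ℂ) * z) := by
  have h := (heig (-1)).1
  rw [neg_add_cancel, wojcikCoin_zero] at h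
  rw [negTerm_zero, mul_div_assoc', h]
  ring

lemma lam_mul_negTerm_succ_left (heig : WojcikEigenEq ω lam ΨL ΨR) (hz : z ≠ 0) (n : ℕ) :
    lam * negTerm ΨL z (n + 1) =
      (negTerm ΨL z n + negTerm ΨR z n) / ((Real.sqrt 2 : ℂ) * z) := by
  have h := (heig (-((n : ℤ) + 1) - 1)).1
  rw [sub_add_cancel, wojcikCoin_of_ne_zero ω (by omega)] at h
  rw [negTerm_succ ΨL hz, negTerm, negTerm, mul_div_assoc', ← mul_assoc, h]
  field_simp

lemma lam_mul_right_apply_zero (heig : WojcikEigenEq ω lam ΨL ΨR) (hz : z ≠ 0) :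
    lam * ΨR 0 = z / (Real.sqrt 2 : ℂ) * (negTerm ΨL z 0 - negTerm ΨR z 0) := by
  have h := (heig 0).2
  rw [zero_sub, wojcikCoin_of_ne_zero ω (by omega)] at h
  rw [h, negTerm_zero, negTerm_zero]
  field_simp

lemma lam_mul_negTerm_right (heig : WojcikEigenEq ω lam ΨL ΨR) (hz : z ≠ 0) (n : ℕ) :
    lam * negTerm ΨR z n =
      z / (Real.sqrt 2 : ℂ) * (negTerm ΨL z (n + 1) - negTerm ΨR z (n + 1)) := by
  have h := (heig (-((n : ℤ) + 1))).2
  rw [wojcikCoin_of_ne_zero ω (by omega)] at h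
  rw [negTerm_succ ΨL hz, negTerm_succ ΨR hz, negTerm, ← mul_assoc, h]
  field_simp

lemma lam_mul_tsum_negTerm_left (heig : WojcikEigenEq ω lam ΨL ΨR) (hz : z ≠ 0)
    (hsL : Summable (negTerm ΨL z)) (hsR : Summable (negTerm ΨR z)) :
    lam * ∑' n, negTerm ΨL z n =
      (ω * (ΨL 0 + ΨR 0) + (∑' n, negTerm ΨL z n + ∑' n, negTerm ΨR z n)) /
        ((Real.sqrt 2 : ℂ) * z) := by
  calc lam * ∑' n, negTerm ΨL z n
      = lam * negTerm ΨL z 0 + ∑' n, lam * negTerm ΨL z (n + 1) := by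
        rw [← tsum_mul_left, (hsL.mul_left lam).tsum_eq_zero_add]
    _ = ω * (ΨL 0 + ΨR 0) / ((Real.sqrt 2 : ℂ) * z) +
          ∑' n, (negTerm ΨL z n + negTerm ΨR z n) / ((Real.sqrt 2 : ℂ) * z) := by
        rw [heig.lam_mul_negTerm_zero_left, tsum_congr (heig.lam_mul_negTerm_succ_left hz)]
    _ = _ := by rw [tsum_div_const, hsL.tsum_add hsR]; ring

lemma lam_mul_tsum_negTerm_right (heig : WojcikEigenEq ω lam ΨL ΨR) (hz : z ≠ 0)
    (hsL : Summable (negTerm ΨL z)) (hsR : Summable (negTerm ΨR z)) :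
    lam * ∑' n, negTerm ΨR z n =
      z / (Real.sqrt 2 : ℂ) * (∑' n, negTerm ΨL z n - ∑' n, negTerm ΨR z n) - lam * ΨR 0 := by
  have hsL' := (summable_nat_add_iff 1).mpr hsL
  have hsR' := (summable_nat_add_iff 1).mpr hsR
  calc lam * ∑' n, negTerm ΨR z n
      = z / (Real.sqrt 2 : ℂ) *
          (∑' n, negTerm ΨL z (n + 1) - ∑' n, negTerm ΨR z (n + 1)) := by
        rw [← tsum_mul_left, tsum_congr (heig.lam_mul_negTerm_right hz), tsum_mul_left,
          hsL'.tsum_sub hsR']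
    _ = z / (Real.sqrt 2 : ℂ) * ((∑' n, negTerm ΨL z n - negTerm ΨL z 0) -
          (∑' n, negTerm ΨR z n - negTerm ΨR z 0)) := by
        rw [hsL.tsum_eq_zero_add, hsR.tsum_eq_zero_add, add_sub_cancel_left, add_sub_cancel_left]
    _ = _ := by rw [heig.lam_mul_right_apply_zero hz]; ring

end WojcikEigenEq

theorem wojcik_generating_function_negative_part_general
    (ω lam : ℂ) (ΨL ΨR : ℤ → ℂ)
    (heig : WojcikEigenEq ω lam ΨL ΨR)
    (z : ℂ) (hz : z ≠ 0)
    (hL : Summable fun n : ℕ => ‖ΨL (-((n : ℤ) + 1)) * z ^ (-((n : ℤ) + 1))‖)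
    (hR : Summable fun n : ℕ => ‖ΨR (-((n : ℤ) + 1)) * z ^ (-((n : ℤ) + 1))‖)
    (fL fR α β : ℂ)
    (hfL : fL = ∑' n : ℕ, ΨL (-((n : ℤ) + 1)) * z ^ (-((n : ℤ) + 1)))
    (hfR : fR = ∑' n : ℕ, ΨR (-((n : ℤ) + 1)) * z ^ (-((n : ℤ) + 1)))
    (hα : α = ΨL 0) (hβ : β = ΨR 0) :
    (lam - 1 / ((Real.sqrt 2 : ℂ) * z)) * fL - 1 / ((Real.sqrt 2 : ℂ) * z) * fR =
      ω * (α + β) / ((Real.sqrt 2 : ℂ) * z) ∧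
    -(z / (Real.sqrt 2 : ℂ)) * fL + (lam + z / (Real.sqrt 2 : ℂ)) * fR = -lam * β := by
  have hsL : Summable (negTerm ΨL z) := hL.of_norm
  have hsR : Summable (negTerm ΨR z) := hR.of_norm
  change fL = ∑' n, negTerm ΨL z n at hfL
  change fR = ∑' n, negTerm ΨR z n at hfR
  subst hfL hfR hα hβ
  exact ⟨by linear_combination heig.lam_mul_tsum_negTerm_left hz hsL hsR,
    by linear_combination heig.lam_mul_tsum_negTerm_right hz hsL hsR⟩

theorem wojcik_generating_function_negative_part
    (ω lam : ℂ) (hlam : lam ≠ 0) (ΨL ΨR : ℤ → ℂ)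
    (heig : WojcikEigenEq ω lam ΨL ΨR)
    (z : ℂ) (hz : z ≠ 0)
    (hL : Summable fun n : ℕ => ‖ΨL (-((n : ℤ) + 1)) * z ^ (-((n : ℤ) + 1))‖)
    (hR : Summable fun n : ℕ => ‖ΨR (-((n : ℤ) + 1)) * z ^ (-((n : ℤ) + 1))‖)
    (fL fR α β : ℂ)
    (hfL : fL = ∑' n : ℕ, ΨL (-((n : ℤ) + 1)) * z ^ (-((n : ℤ) + 1)))
    (hfR : fR = ∑' n : ℕ, ΨR (-((n : ℤ) + 1)) * z ^ (-((n : ℤ) + 1)))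
    (hα : α = ΨL 0) (hβ : β = ΨR 0) :
    (lam - 1 / ((Real.sqrt 2 : ℂ) * z)) * fL - 1 / ((Real.sqrt 2 : ℂ) * z) * fR =
      ω * (α + β) / ((Real.sqrt 2 : ℂ) * z) ∧
    -(z / (Real.sqrt 2 : ℂ)) * fL + (lam + z / (Real.sqrt 2 : ℂ)) * fR = -lam * β :=
  wojcik_generating_function_negative_part_general ω lam ΨL ΨR heig z hz hL hR fL fR α β hfL hfR hα
    hβ

end
end

section
/- Let φ ∈ (0,1), ω = e^{2πiφ}, α ∈ ℂ with α ≠ 0, β = −iα, and λ ∈ ℂ with λ ≠ 0. If (√2/(λα))·((−λ² + ω/2)α − (ω/2)β) = ω(α−β)/(√2 λ((ω−1)α − ωβ)), then λ² = ω[(1−2ω+ω²) + i(1−ω+ω²)]/(1−2ω+2ω²). (The denominators (ω−1)α−ωβ and 1−2ω+2ω² are automatically nonzero since |ω| = 1.) -/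
/-!
With `β = -iα` both expressions for `θ_s` depend on `ω` only through `u = ω(1 + i)`, and equating
them gives `(u - 2λ²)(u - 1) = u`. Since `|ω| = 1` we have `|u| = √2`, so `u ≠ 1`; solving for `λ²`
and rationalising with the factor `ω(1 - i) - 1` (also nonzero) yields the stated formula, because
`(ω(1 + i) - 1)(ω(1 - i) - 1) = 1 - 2ω + 2ω²`.
-/

open Complex

noncomputable def decayParam₁ (ω α β lam : ℂ) : ℂ :=
  (Real.sqrt 2 : ℂ) / (lam * α) * ((-lam ^ 2 + ω / 2) * α - ω / 2 * β)

noncomputable def decayParam₂ (ω α β lam : ℂ) : ℂ :=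
  ω * (α - β) / ((Real.sqrt 2 : ℂ) * lam * ((ω - 1) * α - ω * β))

theorem mul_ne_one_of_norm_eq_one {ω z : ℂ} (hω : ‖ω‖ = 1) (hz : ‖z‖ ≠ 1) : ω * z ≠ 1 := by
  intro h
  apply hz
  simpa [hω] using congrArg norm h

theorem norm_one_add_I_ne_one : ‖(1 + I : ℂ)‖ ≠ 1 := by
  rw [Ne, norm_def, Real.sqrt_eq_one]
  simp [normSq_apply]

theorem norm_one_sub_I_ne_one : ‖(1 - I : ℂ)‖ ≠ 1 := by
  rw [Ne, norm_def, Real.sqrt_eq_one]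
  simp [normSq_apply]

theorem norm_exp_two_pi_I_mul (φ : ℝ) : ‖exp (2 * (Real.pi : ℂ) * I * (φ : ℂ))‖ = 1 := by
  rw [show 2 * (Real.pi : ℂ) * I * (φ : ℂ) = ((2 * Real.pi * φ : ℝ) : ℂ) * I by push_cast; ring]
  exact norm_exp_ofReal_mul_I _

theorem one_sub_two_mul_add_two_mul_sq (ω : ℂ) :
    1 - 2 * ω + 2 * ω ^ 2 = (ω * (1 + I) - 1) * (ω * (1 - I) - 1) := by
  linear_combination ω ^ 2 * I_sq

theorem quadratic_of_decayParam_eq {ω α lam : ℂ} (hα : α ≠ 0) (hlam : lam ≠ 0)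
    (hu : ω * (1 + I) ≠ 1) (h : decayParam₁ ω α (-I * α) lam = decayParam₂ ω α (-I * α) lam) :
    (ω * (1 + I) - 2 * lam ^ 2) * (ω * (1 + I) - 1) = ω * (1 + I) := by
  have hu' : ω * (1 + I) - 1 ≠ 0 := sub_ne_zero.mpr hu
  have hden : (ω - 1) * α - ω * (-I * α) = (ω * (1 + I) - 1) * α := by ring
  have hsqrt : ((Real.sqrt 2 : ℝ) : ℂ) ^ 2 = 2 := by
    norm_cast
    exact Real.sq_sqrt (by norm_num)
  have hs : ((Real.sqrt 2 : ℝ) : ℂ) ≠ 0 := by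
    norm_cast
    positivity
  rw [decayParam₁, decayParam₂, hden] at h
  field_simp at h
  rw [hsqrt] at h
  linear_combination h / 2

theorem sq_eq_of_quadratic {ω lam : ℂ} (hu : ω * (1 + I) ≠ 1) (hv : ω * (1 - I) ≠ 1)
    (h : (ω * (1 + I) - 2 * lam ^ 2) * (ω * (1 + I) - 1) = ω * (1 + I)) :
    lam ^ 2 = ω * ((1 - 2 * ω + ω ^ 2) + I * (1 - ω + ω ^ 2)) / (1 - 2 * ω + 2 * ω ^ 2) := by
  have hD : 1 - 2 * ω + 2 * ω ^ 2 ≠ 0 := by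
    rw [one_sub_two_mul_add_two_mul_sq]
    exact mul_ne_zero (sub_ne_zero.mpr hu) (sub_ne_zero.mpr hv)
  rw [eq_div_iff hD]
  linear_combination (1 - ω * (1 - I)) / 2 * h +
    (lam ^ 2 * ω ^ 2 + ω ^ 2 / 2 - ω ^ 3 * (1 + I) / 2) * I_sq

theorem wojcik_lambda_sq_beta_eq_neg_i_alpha_general
    (φ : ℝ) (ω α β lam : ℂ)
    (hω : ω = Complex.exp (2 * (Real.pi : ℂ) * Complex.I * (φ : ℂ)))
    (hα : α ≠ 0) (hβ : β = -Complex.I * α) (hlam : lam ≠ 0)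
    (h : (Real.sqrt 2 : ℂ) / (lam * α) * ((-lam ^ 2 + ω / 2) * α - ω / 2 * β) =
         ω * (α - β) / ((Real.sqrt 2 : ℂ) * lam * ((ω - 1) * α - ω * β))) :
    lam ^ 2 =
      ω * ((1 - 2 * ω + ω ^ 2) + Complex.I * (1 - ω + ω ^ 2)) / (1 - 2 * ω + 2 * ω ^ 2) := by
  subst hβ
  have hω_norm : ‖ω‖ = 1 := hω ▸ norm_exp_two_pi_I_mul φ
  have hu := mul_ne_one_of_norm_eq_one hω_norm norm_one_add_I_ne_one
  have hv := mul_ne_one_of_norm_eq_one hω_norm norm_one_sub_I_ne_one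
  exact sq_eq_of_quadratic hu hv (quadratic_of_decayParam_eq hα hlam hu h)

theorem wojcik_lambda_sq_beta_eq_neg_i_alpha
    (φ : ℝ) (hφ : φ ∈ Set.Ioo (0 : ℝ) 1) (ω α β lam : ℂ)
    (hω : ω = Complex.exp (2 * (Real.pi : ℂ) * Complex.I * (φ : ℂ)))
    (hα : α ≠ 0) (hβ : β = -Complex.I * α) (hlam : lam ≠ 0)
    (h : (Real.sqrt 2 : ℂ) / (lam * α) * ((-lam ^ 2 + ω / 2) * α - ω / 2 * β) =
         ω * (α - β) / ((Real.sqrt 2 : ℂ) * lam * ((ω - 1) * α - ω * β))) :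
    lam ^ 2 =
      ω * ((1 - 2 * ω + ω ^ 2) + Complex.I * (1 - ω + ω ^ 2)) / (1 - 2 * ω + 2 * ω ^ 2) :=
  wojcik_lambda_sq_beta_eq_neg_i_alpha_general φ ω α β lam hω hα hβ hlam h
end
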